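/- Let q > 0, α ∈ [0,1], n ≥ k ≥ 1. Then the (α,q)-Bernstein operator applied to t^k satisfies T_{n,q,α}(t^k; x) = Σ_{r=0}^{k} a(r,k) x^r, where a(r,k) = (q^{r(r-1)/2}[n-2]_q!/([n]_q^k [n-r]_q!)) · {(1-α)[n-r]_q([n+r-1]_q S_q(k+1,r+1) - [r+1]_q[n-1]_q S_q(k,r+1)) + α[n]_q[n-1]_q S_q(k,r)}. -/

import Mathlib

open Finset Filter Topology

/-- The q-integer `[m]_q = 1 + q + ... + q^{m-1}`, with `[0]_q = 0`. -/
noncomputable def qInt (q : ℝ) (m : ℕ) : ℝ := ∑ i ∈ Finset.range m, q ^ i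

/-- The q-factorial `[n]_q! = [1]_q [2]_q ⋯ [n]_q`. -/
noncomputable def qFact (q : ℝ) (n : ℕ) : ℝ := ∏ i ∈ Finset.range n, qInt q (i + 1)

/-- The q-binomial coefficient `[n]_q!/([k]_q! [n-k]_q!)` (zero if `k > n`). -/
noncomputable def qBinom (q : ℝ) (n k : ℕ) : ℝ :=
  if k ≤ n then qFact q n / (qFact q k * qFact q (n - k)) else 0

/-- The q-Stirling number of the second kind. -/
noncomputable def qStirling (q : ℝ) (k r : ℕ) : ℝ :=
  (1 / (qFact q r * q ^ (r * (r - 1) / 2))) *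
    ∑ i ∈ Finset.range (r + 1),
      (-1 : ℝ) ^ i * q ^ (i * (i - 1) / 2) * qBinom q r i * (qInt q (r - i)) ^ k

/-- The q-forward difference operator on sequences:
`Δ_q^0 f_i = f_i`, `Δ_q^{r+1} f_i = Δ_q^r f_{i+1} - q^r Δ_q^r f_i`. -/
noncomputable def qDiff (q : ℝ) : ℕ → (ℕ → ℝ) → ℕ → ℝ
  | 0, f, i => f i
  | r + 1, f, i => qDiff q r f (i + 1) - q ^ r * qDiff q r f i

/-- The eigenvalues `λ_{k,q}^{(α,n)}` of the (α,q)-Bernstein operator. -/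
noncomputable def lamEig (q α : ℝ) (n k : ℕ) : ℝ :=
  q ^ (k * (k - 1) / 2) * qFact q (n - 2) / (qFact q (n - k) * (qInt q n) ^ k) *
    ((1 - α) * qInt q (n - k) * qInt q (n - 1 + k) + α * qInt q n * qInt q (n - 1))

/-- The coefficients `a_{n,q}(r,k)` of `T_{n,q,α}(t^k; x) = Σ_r a_{n,q}(r,k) x^r`. -/
noncomputable def aCoef (q α : ℝ) (n r k : ℕ) : ℝ :=
  q ^ (r * (r - 1) / 2) * qFact q (n - 2) / ((qInt q n) ^ k * qFact q (n - r)) *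
    ((1 - α) * qInt q (n - r) *
        (qInt q (n + r - 1) * qStirling q (k + 1) (r + 1) -
          qInt q (r + 1) * qInt q (n - 1) * qStirling q k (r + 1)) +
      α * qInt q n * qInt q (n - 1) * qStirling q k r)

/-- The (α,q)-Bernstein operator, via its forward-difference representation
`T_{n,q,α}(f;x) = Σ_{r=0}^n ((1-α) C_q(n-1,r) Δ_q^r g_0 + α C_q(n,r) Δ_q^r f_0) x^r`,
where `f_i = f([i]_q/[n]_q)` and
`g_i = (1 - q^{n-i-1}[i]_q/[n-1]_q) f_i + (q^{n-i-1}[i]_q/[n-1]_q) f_{i+1}`. -/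
noncomputable def Talpha (q α : ℝ) (n : ℕ) (f : ℝ → ℝ) (x : ℝ) : ℝ :=
  let fs : ℕ → ℝ := fun i => f (qInt q i / qInt q n)
  let gs : ℕ → ℝ := fun i =>
    (1 - q ^ (n - i - 1) * qInt q i / qInt q (n - 1)) * fs i +
      (q ^ (n - i - 1) * qInt q i / qInt q (n - 1)) * fs (i + 1)
  ∑ r ∈ Finset.range (n + 1),
    ((1 - α) * qBinom q (n - 1) r * qDiff q r gs 0 + α * qBinom q n r * qDiff q r fs 0) * x ^ r


/-! The coefficient of `x^r` in `T_{n,q,α}(t^k)` is built from `Δ_q^r f_0` and `Δ_q^r g_0`, where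
`f_i = ([i]_q/[n]_q)^k`. Expanding `Δ_q^r` as an alternating `q`-binomial sum gives
`Δ_q^r ([·]_q^k)_0 = q^{r(r-1)/2} [r]_q! S_q(k,r)`; writing
`[r+1]_q = [r+1-j]_q + q^{r+1-j} [j]_q` in that sum and absorbing `[j]_q` into the `q`-binomial coefficient gives the recurrence
`S_q(k+1,r+1) = S_q(k,r) + [r+1]_q S_q(k,r+1)`, hence `S_q(k,r) = 0` for `r > k`.

Since `g_i = f_i + q^{n-1-i} [i]_q (f_{i+1} - f_i) / [n-1]_q` and the weight `q^{m-i} [i]_q` obeys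
a Leibniz rule for `Δ_q` that vanishes at `i = 0`,
`Δ_q^r g_0 = Δ_q^r f_0 + q^{n-1-r} [r]_q Δ_q^r f_1 / [n-1]_q`. With
`Δ_q^r f_1 = Δ_q^{r+1} f_0 + q^r Δ_q^r f_0` and the recurrence, the coefficient becomes `a(r,k)`,
which vanishes for `r > k`. -/

lemma qInt_zero (q : ℝ) : qInt q 0 = 0 := by simp [qInt]

lemma qInt_add (q : ℝ) (a b : ℕ) : qInt q (a + b) = qInt q a + q ^ a * qInt q b := by
  simp only [qInt, sum_range_add, mul_sum, pow_add]

lemma qInt_succ (q : ℝ) (m : ℕ) : qInt q (m + 1) = 1 + q * qInt q m := by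
  rw [add_comm, qInt_add, pow_one, qInt, sum_range_one, pow_zero]

lemma qInt_pos {q : ℝ} (hq : 0 < q) {m : ℕ} (hm : m ≠ 0) : 0 < qInt q m :=
  sum_pos (fun i _ => pow_pos hq i) (nonempty_range_iff.mpr hm)

lemma qFact_zero (q : ℝ) : qFact q 0 = 1 := prod_range_zero _

lemma qFact_succ (q : ℝ) (n : ℕ) : qFact q (n + 1) = qFact q n * qInt q (n + 1) :=
  prod_range_succ _ _

lemma qFact_eq_qFact_sub_one_mul (q : ℝ) {n : ℕ} (hn : n ≠ 0) :
    qFact q n = qFact q (n - 1) * qInt q n := by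
  obtain ⟨m, rfl⟩ := Nat.exists_eq_succ_of_ne_zero hn
  exact qFact_succ q m

lemma qFact_pos {q : ℝ} (hq : 0 < q) (n : ℕ) : 0 < qFact q n :=
  prod_pos fun _ _ => qInt_pos hq (Nat.succ_ne_zero _)

lemma qBinom_add (q : ℝ) (a b : ℕ) :
    qBinom q (a + b) a = qFact q (a + b) / (qFact q a * qFact q b) := by
  rw [qBinom, if_pos (Nat.le_add_right a b), Nat.add_sub_cancel_left]

lemma qBinom_of_lt (q : ℝ) {n k : ℕ} (h : n < k) : qBinom q n k = 0 := by
  rw [qBinom, if_neg (not_le.mpr h)]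

lemma qBinom_zero {q : ℝ} (hq : 0 < q) (n : ℕ) : qBinom q n 0 = 1 := by
  rw [qBinom, if_pos n.zero_le, qFact_zero, one_mul, Nat.sub_zero, div_self (qFact_pos hq n).ne']

lemma qBinom_self {q : ℝ} (hq : 0 < q) (n : ℕ) : qBinom q n n = 1 := by
  rw [qBinom, if_pos le_rfl, Nat.sub_self, qFact_zero, mul_one, div_self (qFact_pos hq n).ne']

lemma qBinom_succ_succ {q : ℝ} (hq : 0 < q) (a b : ℕ) :
    qBinom q (a + b + 1) (a + 1) = qBinom q (a + b) (a + 1) + q ^ b * qBinom q (a + b) a := by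
  rcases b with _ | c
  · simp [qBinom_of_lt q a.lt_succ_self, qBinom_self hq]
  · have hsplit : qInt q (a + (c + 1) + 1) = qInt q (c + 1) + q ^ (c + 1) * qInt q (a + 1) := by
      rw [show a + (c + 1) + 1 = c + 1 + (a + 1) by ring, qInt_add]
    rw [show a + (c + 1) + 1 = a + 1 + (c + 1) by ring, show a + (c + 1) = a + 1 + c by ring,
      qBinom_add, qBinom_add, show a + 1 + c = a + (c + 1) by ring, qBinom_add,
      show a + 1 + (c + 1) = a + (c + 1) + 1 by ring, qFact_succ q (a + (c + 1)), qFact_succ q a,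
      qFact_succ q c, hsplit]
    have := qFact_pos hq a
    have := qFact_pos hq c
    have := qFact_pos hq (a + (c + 1))
    have := qInt_pos hq (m := a + 1) (by omega)
    have := qInt_pos hq (m := c + 1) (by omega)
    field_simp

lemma qInt_mul_qBinom_succ_succ {q : ℝ} (hq : 0 < q) (a b : ℕ) :
    qInt q (a + 1) * qBinom q (a + b + 1) (a + 1) = qInt q (a + b + 1) * qBinom q (a + b) a := by
  rw [show a + b + 1 = a + 1 + b by ring, qBinom_add, qBinom_add, qFact_succ q a,
    show a + 1 + b = a + b + 1 by ring, qFact_succ q (a + b)]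
  have := qFact_pos hq a
  have := qFact_pos hq b
  have := qInt_pos hq (m := a + 1) (by omega)
  field_simp

lemma qDiff_succ (q : ℝ) (r : ℕ) (f : ℕ → ℝ) (i : ℕ) :
    qDiff q (r + 1) f i = qDiff q r f (i + 1) - q ^ r * qDiff q r f i := rfl

lemma qDiff_add (q : ℝ) (f g : ℕ → ℝ) (r i : ℕ) :
    qDiff q r (fun j => f j + g j) i = qDiff q r f i + qDiff q r g i := by
  induction r generalizing i with
  | zero => rfl
  | succ r ih => simp only [qDiff_succ, ih]; ring

lemma qDiff_const_mul (q c : ℝ) (f : ℕ → ℝ) (r i : ℕ) :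
    qDiff q r (fun j => c * f j) i = c * qDiff q r f i := by
  induction r generalizing i with
  | zero => rfl
  | succ r ih => simp only [qDiff_succ, ih]; ring

lemma qDiff_succ_const (q c : ℝ) (r i : ℕ) : qDiff q (r + 1) (fun _ => c) i = 0 := by
  induction r generalizing i with
  | zero => show c - q ^ 0 * c = 0; ring
  | succ r ih => rw [qDiff_succ, ih, ih]; ring

lemma neg_one_pow_succ_mul_pow_triangle (q : ℝ) (j : ℕ) :
    (-1 : ℝ) ^ (j + 1) * q ^ ((j + 1) * (j + 1 - 1) / 2) =
      -((-1) ^ j * q ^ (j * (j - 1) / 2) * q ^ j) := by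
  rw [Nat.triangle_succ, pow_add, pow_succ]; ring

lemma qDiff_eq_sum_antidiagonal {q : ℝ} (hq : 0 < q) (f : ℕ → ℝ) (r i : ℕ) :
    qDiff q r f i = ∑ p ∈ antidiagonal r,
      (-1) ^ p.1 * q ^ (p.1 * (p.1 - 1) / 2) * qBinom q r p.1 * f (i + p.2) := by
  induction r generalizing i with
  | zero => simp [qBinom_zero hq, qDiff]
  | succ r ih =>
    have hpascal : ∀ p ∈ antidiagonal r,
        (-1) ^ (p.1 + 1) * q ^ ((p.1 + 1) * (p.1 + 1 - 1) / 2) * qBinom q (r + 1) (p.1 + 1) *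
            f (i + p.2) =
          (-1) ^ (p.1 + 1) * q ^ ((p.1 + 1) * (p.1 + 1 - 1) / 2) * qBinom q r (p.1 + 1) *
            f (i + p.2) -
          q ^ r * ((-1) ^ p.1 * q ^ (p.1 * (p.1 - 1) / 2) * qBinom q r p.1 * f (i + p.2)) := by
      rintro ⟨a, b⟩ hp
      obtain rfl : a + b = r := mem_antidiagonal.mp hp
      rw [qBinom_succ_succ hq, neg_one_pow_succ_mul_pow_triangle, pow_add]
      ring
    have hshift : ∑ p ∈ antidiagonal r,
        (-1) ^ p.1 * q ^ (p.1 * (p.1 - 1) / 2) * qBinom q r p.1 * f (i + 1 + p.2) =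
          f (i + (r + 1)) + ∑ p ∈ antidiagonal r,
            (-1) ^ (p.1 + 1) * q ^ ((p.1 + 1) * (p.1 + 1 - 1) / 2) * qBinom q r (p.1 + 1) *
              f (i + p.2) := by
      -- peel the sum over `antidiagonal (r + 1)` at either end; the term at `(r + 1, 0)` is zero
      have h := (Nat.sum_antidiagonal_succ (n := r) (f := fun p : ℕ × ℕ =>
        (-1) ^ p.1 * q ^ (p.1 * (p.1 - 1) / 2) * qBinom q r p.1 * f (i + p.2))).symm.trans
        Nat.sum_antidiagonal_succ'
      simp only [qBinom_zero hq, qBinom_of_lt q r.lt_succ_self] at h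
      simp only [add_comm 1, add_assoc]
      linear_combination -h
    rw [qDiff_succ, ih, ih, Nat.sum_antidiagonal_succ, sum_congr rfl hpascal, sum_sub_distrib,
      ← mul_sum, hshift, qBinom_zero hq]
    ring

lemma qDiff_qInt_pow_zero {q : ℝ} (hq : 0 < q) (k m : ℕ) :
    qDiff q m (fun i => qInt q i ^ k) 0 =
      qFact q m * q ^ (m * (m - 1) / 2) * qStirling q k m := by
  have := qFact_pos hq m
  rw [qDiff_eq_sum_antidiagonal hq, Nat.sum_antidiagonal_eq_sum_range_succ_mk, qStirling]
  field_simp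
  simp only [zero_add]

lemma qDiff_qInt_pow_succ_zero {q : ℝ} (hq : 0 < q) (k r : ℕ) :
    qDiff q (r + 1) (fun i => qInt q i ^ (k + 1)) 0 =
      qInt q (r + 1) * (qDiff q (r + 1) (fun i => qInt q i ^ k) 0 +
        q ^ r * qDiff q r (fun i => qInt q i ^ k) 0) := by
  simp only [qDiff_eq_sum_antidiagonal hq, zero_add]
  have hsplit : ∀ p ∈ antidiagonal (r + 1),
      (-1) ^ p.1 * q ^ (p.1 * (p.1 - 1) / 2) * qBinom q (r + 1) p.1 * qInt q p.2 ^ (k + 1) =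
        qInt q (r + 1) *
            ((-1) ^ p.1 * q ^ (p.1 * (p.1 - 1) / 2) * qBinom q (r + 1) p.1 * qInt q p.2 ^ k) -
          (-1) ^ p.1 * q ^ (p.1 * (p.1 - 1) / 2) * qBinom q (r + 1) p.1 *
            (q ^ p.2 * qInt q p.1) * qInt q p.2 ^ k := by
    rintro ⟨a, b⟩ hp
    have hsum : qInt q (r + 1) = qInt q b + q ^ b * qInt q a := by
      rw [← qInt_add, ← mem_antidiagonal.mp hp, add_comm]
    rw [hsum]
    ring
  have hweighted : ∑ p ∈ antidiagonal (r + 1),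
      (-1) ^ p.1 * q ^ (p.1 * (p.1 - 1) / 2) * qBinom q (r + 1) p.1 *
        (q ^ p.2 * qInt q p.1) * qInt q p.2 ^ k =
      -(qInt q (r + 1) * q ^ r * ∑ p ∈ antidiagonal r,
        (-1) ^ p.1 * q ^ (p.1 * (p.1 - 1) / 2) * qBinom q r p.1 * qInt q p.2 ^ k) := by
    rw [Nat.sum_antidiagonal_succ, qInt_zero, mul_sum, ← sum_neg_distrib]
    rw [mul_zero, mul_zero, zero_mul, zero_add]
    refine sum_congr rfl fun ⟨a, b⟩ hp => ?_
    obtain rfl : a + b = r := mem_antidiagonal.mp hp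
    dsimp only
    rw [neg_one_pow_succ_mul_pow_triangle, pow_add]
    linear_combination (-((-1) ^ a * q ^ (a * (a - 1) / 2) * q ^ a * q ^ b * qInt q b ^ k)) *
      qInt_mul_qBinom_succ_succ hq a b
  rw [sum_congr rfl hsplit, sum_sub_distrib, ← mul_sum, hweighted]
  ring

lemma qDiff_qInt_pow_zero_of_lt {q : ℝ} (hq : 0 < q) {k m : ℕ} (h : k < m) :
    qDiff q m (fun i => qInt q i ^ k) 0 = 0 := by
  induction k generalizing m with
  | zero =>
    obtain ⟨r, rfl⟩ := Nat.exists_eq_add_of_lt h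
    simpa using qDiff_succ_const q 1 r 0
  | succ k ih =>
    obtain ⟨r, rfl⟩ : ∃ r, m = r + 1 := ⟨m - 1, by omega⟩
    rw [qDiff_qInt_pow_succ_zero hq, ih (by omega), ih (by omega)]
    ring

lemma qStirling_of_lt {q : ℝ} (hq : 0 < q) {k m : ℕ} (h : k < m) : qStirling q k m = 0 := by
  have hm := qDiff_qInt_pow_zero hq k m
  rw [qDiff_qInt_pow_zero_of_lt hq h] at hm
  have := qFact_pos hq m
  have := pow_pos hq (m * (m - 1) / 2)
  exact (mul_eq_zero.mp hm.symm).resolve_left (by positivity)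

lemma qStirling_succ_succ {q : ℝ} (hq : 0 < q) (k r : ℕ) :
    qStirling q (k + 1) (r + 1) = qStirling q k r + qInt q (r + 1) * qStirling q k (r + 1) := by
  have h := qDiff_qInt_pow_succ_zero hq k r
  rw [qDiff_qInt_pow_zero hq, qDiff_qInt_pow_zero hq, qDiff_qInt_pow_zero hq, qFact_succ,
    Nat.triangle_succ, pow_add] at h
  have := qFact_pos hq r
  have := pow_pos hq (r * (r - 1) / 2)
  have := pow_pos hq r
  have := qInt_pos hq (m := r + 1) (by omega)
  apply mul_left_cancel₀
    (by positivity : qFact q r * qInt q (r + 1) * (q ^ (r * (r - 1) / 2) * q ^ r) ≠ 0)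
  linear_combination h

lemma qDiff_pow_mul_qInt_mul_sub (q : ℝ) (f : ℕ → ℝ) (m : ℕ) {r i : ℕ}
    (h : r + i ≤ m) :
    qDiff q r (fun j => q ^ (m - j) * qInt q j * (f (j + 1) - f j)) i =
      q ^ (m - i - r) * qInt q (i + r) * qDiff q r f (i + 1) -
        q ^ (m - i) * qInt q i * qDiff q r f i := by
  induction r generalizing i with
  | zero => simp only [qDiff, Nat.sub_zero, add_zero]; ring
  | succ r ih =>
    obtain ⟨e, rfl⟩ : ∃ e, m = e + r + 1 + i := ⟨m - r - 1 - i, by omega⟩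
    rw [qDiff_succ, qDiff_succ, qDiff_succ, ih (by omega), ih (by omega),
      show e + r + 1 + i - (i + 1) - r = e by omega, show e + r + 1 + i - (i + 1) = e + r by omega,
      show e + r + 1 + i - i - r = e + 1 by omega, show e + r + 1 + i - i - (r + 1) = e by omega,
      show e + r + 1 + i - i = e + r + 1 by omega, show i + 1 + r = i + r + 1 by ring,
      show i + (r + 1) = i + r + 1 by ring, qInt_succ, qInt_succ]
    ring

noncomputable def qInterp (q : ℝ) (n : ℕ) (f : ℕ → ℝ) (i : ℕ) : ℝ :=
  (1 - q ^ (n - i - 1) * qInt q i / qInt q (n - 1)) * f i +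
    (q ^ (n - i - 1) * qInt q i / qInt q (n - 1)) * f (i + 1)

lemma Talpha_eq_sum (q α : ℝ) (n : ℕ) (f : ℝ → ℝ) (x : ℝ) :
    Talpha q α n f x = ∑ r ∈ range (n + 1),
      ((1 - α) * qBinom q (n - 1) r * qDiff q r (qInterp q n fun i => f (qInt q i / qInt q n)) 0 +
        α * qBinom q n r * qDiff q r (fun i => f (qInt q i / qInt q n)) 0) * x ^ r :=
  rfl

lemma qDiff_qInterp_zero (q : ℝ) (f : ℕ → ℝ) {n r : ℕ} (hr : r < n) :
    qDiff q r (qInterp q n f) 0 = qDiff q r f 0 +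
      q ^ (n - 1 - r) * qInt q r / qInt q (n - 1) *
        (qDiff q (r + 1) f 0 + q ^ r * qDiff q r f 0) := by
  have hsplit : qInterp q n f = fun j =>
      f j + (qInt q (n - 1))⁻¹ * (q ^ (n - 1 - j) * qInt q j * (f (j + 1) - f j)) := by
    funext j
    rw [qInterp, Nat.sub_right_comm]
    ring
  rw [hsplit, qDiff_add, qDiff_const_mul, qDiff_pow_mul_qInt_mul_sub q f (n - 1) (by omega),
    qDiff_succ, qInt_zero, Nat.sub_zero, zero_add]
  ring

lemma qDiff_qInt_div_pow_zero {q : ℝ} (hq : 0 < q) (N : ℝ) (k m : ℕ) :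
    qDiff q m (fun i => (qInt q i / N) ^ k) 0 =
      q ^ (m * (m - 1) / 2) * qFact q m * qStirling q k m / N ^ k := by
  have hscale : (fun i => (qInt q i / N) ^ k) = fun i => (N ^ k)⁻¹ * qInt q i ^ k := by
    funext i
    rw [div_pow, div_eq_inv_mul]
  rw [hscale, qDiff_const_mul, qDiff_qInt_pow_zero hq]
  ring

lemma Talpha_pow_coeff {q : ℝ} (hq : 0 < q) (α : ℝ) {n k r : ℕ} (hn : 2 ≤ n)
    (hr : r ≤ n) :
    (1 - α) * qBinom q (n - 1) r * qDiff q r (qInterp q n fun i => (qInt q i / qInt q n) ^ k) 0 +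
        α * qBinom q n r * qDiff q r (fun i => (qInt q i / qInt q n) ^ k) 0 =
      aCoef q α n r k := by
  have hFn : qFact q n = qFact q (n - 2) * qInt q (n - 1) * qInt q n := by
    rw [qFact_eq_qFact_sub_one_mul q (by omega : n ≠ 0),
      qFact_eq_qFact_sub_one_mul q (by omega : n - 1 ≠ 0), Nat.sub_sub]
  have := qFact_pos hq (n - 2)
  have := qInt_pos hq (m := n) (by omega)
  have := qInt_pos hq (m := n - 1) (by omega)
  rcases hr.lt_or_eq with hr | hr
  · have hF1 : qFact q (n - 1) = qFact q (n - 2) * qInt q (n - 1) := by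
      rw [qFact_eq_qFact_sub_one_mul q (by omega : n - 1 ≠ 0), Nat.sub_sub]
    have hFr : qFact q (n - r) = qFact q (n - 1 - r) * qInt q (n - r) := by
      rw [qFact_eq_qFact_sub_one_mul q (by omega : n - r ≠ 0), Nat.sub_right_comm]
    have hInt : qInt q (n + r - 1) = qInt q (n - 1) + q ^ (n - 1 - r) * q ^ r * qInt q r := by
      rw [← pow_add, Nat.sub_add_cancel (by omega), ← qInt_add, Nat.sub_add_comm (by omega)]
    have := qFact_pos hq r
    have := qFact_pos hq (n - 1 - r)
    have := qInt_pos hq (m := n - r) (by omega)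
    have := qInt_pos hq (m := r + 1) (by omega)
    rw [qDiff_qInterp_zero q _ hr, qDiff_qInt_div_pow_zero hq, qDiff_qInt_div_pow_zero hq, aCoef,
      qStirling_succ_succ hq, qBinom, if_pos (by omega), qBinom, if_pos hr.le, hFn, hF1, hFr,
      hInt, qFact_succ, Nat.triangle_succ, pow_add]
    field_simp
    ring
  · rw [hr, qBinom_of_lt q (by omega : n - 1 < n), qBinom_self hq, qDiff_qInt_div_pow_zero hq,
      aCoef, Nat.sub_self, qFact_zero, qInt_zero, hFn]
    field_simp
    ring

lemma aCoef_eq_zero_of_lt {q : ℝ} (hq : 0 < q) (α : ℝ) (n : ℕ) {r k : ℕ} (h : k < r) :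
    aCoef q α n r k = 0 := by
  rw [aCoef, qStirling_of_lt hq h, qStirling_of_lt hq (by omega : k + 1 < r + 1),
    qStirling_of_lt hq (by omega : k < r + 1)]
  ring

theorem Talpha_monomial_general (q α : ℝ) (hq : 0 < q)
    (n k : ℕ) (hn : 2 ≤ n) (hkn : k ≤ n) (x : ℝ) :
    Talpha q α n (fun t => t ^ k) x = ∑ r ∈ Finset.range (k + 1), aCoef q α n r k * x ^ r := by
  rw [Talpha_eq_sum]
  calc _ = ∑ r ∈ range (n + 1), aCoef q α n r k * x ^ r :=
        sum_congr rfl fun r hr => by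
          rw [Talpha_pow_coeff hq α hn (mem_range_succ_iff.mp hr)]
    _ = _ := (sum_subset (range_subset_range.mpr (by omega)) fun r _ hr => by
        rw [aCoef_eq_zero_of_lt hq α n (by simpa using hr), zero_mul]).symm

theorem Talpha_monomial (q α : ℝ) (hq : 0 < q) (hα : α ∈ Set.Icc (0 : ℝ) 1)
    (n k : ℕ) (hn : 2 ≤ n) (hk : 1 ≤ k) (hkn : k ≤ n) (x : ℝ) :
    Talpha q α n (fun t => t ^ k) x = ∑ r ∈ Finset.range (k + 1), aCoef q α n r k * x ^ r :=
  Talpha_monomial_general q α hq n k hn hkn x
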